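/- arXiv:math/0611745 — 2 statements merged into one kernel-verified Lean document; each statement's English description precedes it below -/
import Mathlib

section
/- Let n ≥ 2, let 0 < λ_1 < ⋯ < λ_{n−1}, b_1, …, b_{n−1} < 0 and M > 0 be given. Define c_k = −Σ_{j=1}^{n−1} b_j b_k/(λ_j + λ_k), W(z) = Σ_{k=1}^{n−1} b_k/(z − λ_k), Z(z) = −1/(2Mz) + Σ_{k=1}^{n−1} c_k/(z − λ_k), W*(z) = −W(−z), Z*(z) = Z(−z). Fix 0 ≤ k ≤ n−1. Then there exist unique polynomials Q, P, P̂ with deg Q ≤ k+1, deg P ≤ k, deg P̂ ≤ k, Q(0) = 0, P(0) = 0 and P̂(0) = 1, such that, as z → ∞: Q(z)Z(z) − P̂(z) = O(z^{−1}), Q(z)W(z) − P(z) = O(1), and P̂(z) + P(z)W*(z) + Q(z)Z*(z) = O(z^{−(k+1)}). Moreover, writing Q(z) = Σ_{j=1}^{k+1} q_j z^j and setting I_{ij} = Σ_{a,b=1}^{n−1} b_a b_b λ_a^i λ_b^j/(λ_a + λ_b), the coefficients satisfy the (k+1)×(k+1) linear system whose first equation is (I_{00} + 1/(2M)) q_1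 + Σ_{j=2}^{k+1} I_{0, j−1} q_j = −1 and whose remaining equations are Σ_{j=1}^{k+1} I_{i, j−1} q_j = 0 for i = 1, …, k. -/
/-!
Write `Q = X * R`. Dividing `Q` by each `X - λ_i` splits `Q W` and `Q Z` into a polynomial plus
a sum `∑ e_i / (z - λ_i) = O(z⁻¹)`, so the first two conditions determine `P` and `P̂` from `Q`.
The `c_k` are chosen so that `Z* = -Z - W W*`; hence the third error equals
`-(Q Z - P̂) - W* (Q W - P) = -∑_j b_j λ_j ρ_j / (z + λ_j)` with
`ρ_j = ∑_a b_a R(λ_a) / (λ_a + λ_j)`, and this is `O(z^{-(k+1)})` iff its moments of order `< k`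
vanish. Together with `P̂(0) = 1` these are exactly the bimoment equations for the coefficients
of `R`. Their matrix is the Gram matrix, on polynomials of degree `≤ k`, of
`(S, R) ↦ ∑ b_a S(λ_a) b_d R(λ_d) / (λ_a + λ_d) + S(0) R(0) / (2M)`, which is positive definite
because `1 / (λ_a + λ_d) = ∫₀¹ t ^ (λ_a + λ_d - 1) dt` and `R` cannot vanish at `0` and at all the
`λ_a` unless `R = 0`. So the system, and with it the approximation problem, is uniquely solvable.
-/

open Polynomial Filter Asymptotics
open scoped Matrix

variable {ι : Type*} [Fintype ι]

lemma isBigO_inv_sub_const (ν : ℝ) : (fun z : ℝ => (z - ν)⁻¹) =O[atTop] fun z => z⁻¹ :=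
  (IsEquivalent.refl.sub_isLittleO (isLittleO_const_id_atTop ν)).inv.isBigO

lemma Polynomial.eq_zero_of_isBigO_inv {p : ℝ[X]}
    (h : (fun z => p.eval z) =O[atTop] fun z : ℝ => z⁻¹) : p = 0 :=
  leadingCoeff_eq_zero.1 ((tendsto_nhds_iff p).1 (h.trans_tendsto tendsto_inv_atTop_zero)).1

lemma Polynomial.eq_C_of_isBigO_one {p : ℝ[X]}
    (h : (fun z => p.eval z) =O[atTop] fun _ : ℝ => (1 : ℝ)) : p = C (p.eval 0) := by
  rw [← coeff_zero_eq_eval_zero]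
  refine eq_C_of_degree_le_zero ((isBoundedUnder_abs_atTop_iff p).1 ?_)
  simpa only [Real.norm_eq_abs] using (isBigO_one_iff ℝ).1 h

lemma isBigO_sum_div_sub (e ν : ι → ℝ) :
    (fun z : ℝ => ∑ i, e i / (z - ν i)) =O[atTop] fun z => z⁻¹ :=
  IsBigO.fun_sum fun i _ => by
    simpa only [div_eq_mul_inv] using (isBigO_inv_sub_const (ν i)).const_mul_left (e i)

lemma mul_sum_div_add (μ ν : ι → ℝ) {z : ℝ} (hz : ∀ j, z + ν j ≠ 0) :
    z * ∑ j, μ j / (z + ν j) = ∑ j, μ j - ∑ j, μ j * ν j / (z + ν j) := by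
  rw [Finset.mul_sum, ← Finset.sum_sub_distrib]
  refine Finset.sum_congr rfl fun j _ => ?_
  field_simp [hz j]
  ring

lemma isBigO_sum_div_add_succ_iff (μ ν : ι → ℝ) (k : ℕ) :
    (fun z => ∑ j, μ j / (z + ν j)) =O[atTop] (fun z : ℝ => (z ^ (k + 2))⁻¹) ↔
      ∑ j, μ j = 0 ∧
        (fun z => ∑ j, μ j * ν j / (z + ν j)) =O[atTop] (fun z : ℝ => (z ^ (k + 1))⁻¹) := by
  set F := fun z => ∑ j, μ j / (z + ν j)
  set G := fun z => ∑ j, μ j * ν j / (z + ν j)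
  have hFG : ∀ᶠ z in atTop, z * F z = ∑ j, μ j - G z := by
    filter_upwards [eventually_all.2 fun j => eventually_gt_atTop (-ν j)] with z hz
    exact mul_sum_div_add μ ν fun j => (by linarith [hz j] : 0 < z + ν j).ne'
  have hpow : ∀ᶠ z : ℝ in atTop, z * (z ^ (k + 2))⁻¹ = (z ^ (k + 1))⁻¹ := by
    filter_upwards [eventually_ne_atTop 0] with z hz
    field_simp
    ring
  constructor
  · intro hF
    have hzF : (fun z => z * F z) =O[atTop] (fun z : ℝ => (z ^ (k + 1))⁻¹) :=
      ((isBigO_refl (fun z : ℝ => z) atTop).mul hF).congr' EventuallyEq.rfl hpow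
    have hG : Tendsto G atTop (nhds 0) := by
      simpa [sub_neg_eq_add] using (isBigO_sum_div_sub (fun j => μ j * ν j) (fun j => -ν j))
        |>.trans_tendsto tendsto_inv_atTop_zero
    have hμ : ∑ j, μ j = 0 := by
      have hlim := (hzF.trans_tendsto (tendsto_inv_atTop_zero.comp
        (tendsto_pow_atTop k.succ_ne_zero))).add hG
      rw [add_zero] at hlim
      refine tendsto_nhds_unique (tendsto_const_nhds.congr' ?_) hlim
      filter_upwards [hFG] with z hz
      rw [hz, sub_add_cancel]
    refine ⟨hμ, hzF.neg_left.congr' ?_ EventuallyEq.rfl⟩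
    filter_upwards [hFG] with z hz
    simp [hz, hμ]
  · rintro ⟨hμ, hG⟩
    have hinv : ∀ᶠ z : ℝ in atTop, (z ^ (k + 1))⁻¹ * z⁻¹ = (z ^ (k + 2))⁻¹ :=
      Eventually.of_forall fun z => by rw [← mul_inv, ← pow_succ]
    refine (hG.neg_left.mul (isBigO_refl (fun z : ℝ => z⁻¹) atTop)).congr' ?_ hinv
    filter_upwards [hFG, eventually_ne_atTop 0] with z hz hz0
    rw [hμ, zero_sub] at hz
    field_simp
    linarith

lemma isBigO_sum_div_add_iff (μ ν : ι → ℝ) (k : ℕ) :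
    (fun z => ∑ j, μ j / (z + ν j)) =O[atTop] (fun z : ℝ => (z ^ (k + 1))⁻¹) ↔
      ∀ m < k, ∑ j, μ j * ν j ^ m = 0 := by
  induction k generalizing μ with
  | zero =>
    simpa [sub_neg_eq_add] using isBigO_sum_div_sub μ (fun j => -ν j)
  | succ k ih =>
    rw [isBigO_sum_div_add_succ_iff, ih, Nat.forall_lt_succ_left]
    simp only [pow_zero, mul_one, pow_succ, mul_assoc, mul_comm (ν _)]

lemma eq_zero_of_sum_mul_rpow_eq_zero {r x : ι → ℝ} (hr : Function.Injective r)
    (hr0 : ∀ a, r a ≠ 0) (h : ∀ t ∈ Set.Ioc (0 : ℝ) 1, ∑ a, x a * t ^ r a = 0) : x = 0 := by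
  let rpowHom (s : ℝ) : unitInterval →* ℝ :=
    { toFun t := (t : ℝ) ^ s
      map_one' := Real.one_rpow s
      map_mul' t u := Real.mul_rpow t.2.1 u.2.1 }
  have hinj : Function.Injective rpowHom := fun s s' hss' =>
    (Real.rpow_right_inj (x := 1 / 2) (by norm_num) (by norm_num)).1
      (DFunLike.congr_fun hss' ⟨1 / 2, by norm_num, by norm_num⟩)
  have hli := (linearIndependent_monoidHom unitInterval ℝ).comp (fun a => rpowHom (r a))
    (hinj.comp hr)
  funext a
  refine linearIndependent_iff'.1 hli Finset.univ x ?_ a (Finset.mem_univ a)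
  funext t
  simp only [Finset.sum_apply, Pi.smul_apply, Function.comp_apply, smul_eq_mul, Pi.zero_apply]
  rcases t.2.1.eq_or_lt with h0 | ht
  · simp [rpowHom, ← h0, Real.zero_rpow (hr0 _)]
  · exact h t ⟨ht, t.2.2⟩

noncomputable def cauchyForm (lam x y : ι → ℝ) : ℝ := ∑ a, ∑ d, x a * y d / (lam a + lam d)

/-- Integrand of the Cauchy form: `∫₀¹ t ^ (λ_a + λ_d - 1) dt = 1 / (λ_a + λ_d)`. -/
noncomputable def cauchyIntegrand (lam x : ι → ℝ) (t : ℝ) : ℝ :=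
  ∑ a, ∑ d, x a * x d * t ^ (lam a + lam d - 1)

lemma intervalIntegrable_const_mul_rpow_sub_one {s : ℝ} (hs : 0 < s) (a : ℝ) :
    IntervalIntegrable (fun t : ℝ => a * t ^ (s - 1)) MeasureTheory.volume 0 1 :=
  (intervalIntegral.intervalIntegrable_rpow' (by linarith)).const_mul a

lemma intervalIntegrable_cauchyIntegrand {lam : ι → ℝ} (hlam : ∀ a, 0 < lam a) (x : ι → ℝ) :
    IntervalIntegrable (cauchyIntegrand lam x) MeasureTheory.volume 0 1 := by
  have := IntervalIntegrable.sum Finset.univ fun a _ => IntervalIntegrable.sum Finset.univ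
    fun d _ => intervalIntegrable_const_mul_rpow_sub_one (add_pos (hlam a) (hlam d)) (x a * x d)
  simp only [Finset.sum_fn] at this
  exact this

lemma integral_cauchyIntegrand {lam : ι → ℝ} (hlam : ∀ a, 0 < lam a) (x : ι → ℝ) :
    ∫ t in (0 : ℝ)..1, cauchyIntegrand lam x t = cauchyForm lam x x := by
  have hpos (a d : ι) : 0 < lam a + lam d := add_pos (hlam a) (hlam d)
  have hterm (a d : ι) := intervalIntegrable_const_mul_rpow_sub_one (hpos a d) (x a * x d)
  unfold cauchyIntegrand cauchyForm
  rw [intervalIntegral.integral_finsetSum fun a _ =>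
    by simpa only [Finset.sum_fn] using IntervalIntegrable.sum Finset.univ fun d _ => hterm a d]
  refine Finset.sum_congr rfl fun a _ => ?_
  rw [intervalIntegral.integral_finsetSum fun d _ => hterm a d]
  refine Finset.sum_congr rfl fun d _ => ?_
  rw [intervalIntegral.integral_const_mul, integral_rpow (Or.inl (by linarith [hpos a d])),
    sub_add_cancel, Real.one_rpow, Real.zero_rpow (hpos a d).ne', sub_zero]
  field_simp

lemma mul_cauchyIntegrand (lam x : ι → ℝ) {t : ℝ} (ht : 0 < t) :
    t * cauchyIntegrand lam x t = (∑ a, x a * t ^ lam a) ^ 2 := by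
  rw [sq, Finset.sum_mul_sum, cauchyIntegrand, Finset.mul_sum]
  refine Finset.sum_congr rfl fun a _ => ?_
  rw [Finset.mul_sum]
  refine Finset.sum_congr rfl fun d _ => ?_
  rw [Real.rpow_sub ht, Real.rpow_one, Real.rpow_add ht]
  field_simp

lemma cauchyIntegrand_nonneg (lam x : ι → ℝ) {t : ℝ} (ht : 0 < t) :
    0 ≤ cauchyIntegrand lam x t :=
  nonneg_of_mul_nonneg_right ((mul_cauchyIntegrand lam x ht).symm ▸ sq_nonneg _) ht

lemma cauchyForm_self_nonneg {lam : ι → ℝ} (hlam : ∀ a, 0 < lam a) (x : ι → ℝ) :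
    0 ≤ cauchyForm lam x x := by
  rw [← integral_cauchyIntegrand hlam, intervalIntegral.integral_of_le zero_le_one]
  exact MeasureTheory.setIntegral_nonneg measurableSet_Ioc fun t ht =>
    cauchyIntegrand_nonneg lam x ht.1

lemma eq_zero_of_cauchyForm_self_eq_zero {lam : ι → ℝ} (hlam : ∀ a, 0 < lam a)
    (hinj : Function.Injective lam) {x : ι → ℝ} (hx : cauchyForm lam x x = 0) : x = 0 := by
  have hae : cauchyIntegrand lam x =ᵐ[MeasureTheory.volume.restrict (Set.Ioc 0 1)] 0 := by
    refine (intervalIntegral.integral_eq_zero_iff_of_le_of_nonneg_ae zero_le_one ?_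
      (intervalIntegrable_cauchyIntegrand hlam x)).1 (by rw [integral_cauchyIntegrand hlam, hx])
    exact MeasureTheory.ae_restrict_of_forall_mem measurableSet_Ioc fun t ht =>
      cauchyIntegrand_nonneg lam x ht.1
  have hcont : ContinuousOn (cauchyIntegrand lam x) (Set.Ioc 0 1) := by
    refine continuousOn_finsetSum _ fun a _ => continuousOn_finsetSum _ fun d _ => ?_
    exact continuousOn_const.mul (continuousOn_id.rpow_const fun t ht => Or.inl ht.1.ne')
  have hzero := MeasureTheory.Measure.eqOn_of_ae_eq hae hcont continuousOn_const
    (by rw [interior_Ioc, closure_Ioo zero_ne_one]; exact Set.Ioc_subset_Icc_self)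
  refine eq_zero_of_sum_mul_rpow_eq_zero hinj (fun a => (hlam a).ne') fun t ht => ?_
  have := mul_cauchyIntegrand lam x ht.1
  rw [hzero ht, Pi.zero_apply, mul_zero] at this
  exact pow_eq_zero_iff two_ne_zero |>.1 this.symm

/-- The polynomial part of `Q(z) * ∑ e_i / (z - λ_i)`. -/
noncomputable def polyPart (lam e : ι → ℝ) (Q : ℝ[X]) : ℝ[X] :=
  ∑ i, C (e i) * (Q /ₘ (X - C (lam i)))

lemma eval_eq_eval_add_mul_divByMonic (Q : ℝ[X]) (a z : ℝ) :
    Q.eval z = Q.eval a + (z - a) * (Q /ₘ (X - C a)).eval z := by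
  conv_lhs => rw [← modByMonic_add_div Q (X - C a)]
  simp [modByMonic_X_sub_C_eq_C_eval]

lemma eval_eq_eval_divX_mul {Q : ℝ[X]} (hQ0 : Q.eval 0 = 0) (z : ℝ) :
    Q.eval z = Q.divX.eval z * z := by
  conv_lhs => rw [← divX_mul_X_add Q]
  simp [coeff_zero_eq_eval_zero, hQ0]

lemma eval_mul_sum_div_sub (lam e : ι → ℝ) (Q : ℝ[X]) {z : ℝ} (hz : ∀ i, z ≠ lam i) :
    Q.eval z * ∑ i, e i / (z - lam i) =
      (polyPart lam e Q).eval z + ∑ i, e i * Q.eval (lam i) / (z - lam i) := by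
  rw [polyPart, eval_finsetSum, Finset.mul_sum, ← Finset.sum_add_distrib]
  refine Finset.sum_congr rfl fun i _ => ?_
  rw [eval_mul, eval_C, eval_eq_eval_add_mul_divByMonic Q (lam i) z]
  field_simp [sub_ne_zero.2 (hz i)]
  ring

lemma natDegree_polyPart_le (lam e : ι → ℝ) {Q : ℝ[X]} {m : ℕ} (hQ : Q.natDegree ≤ m + 1) :
    (polyPart lam e Q).natDegree ≤ m := by
  refine natDegree_sum_le_of_forall_le _ _ fun i _ => (natDegree_C_mul_le _ _).trans ?_
  rw [natDegree_divByMonic Q (monic_X_sub_C (lam i)), natDegree_X_sub_C]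
  omega

lemma eval_zero_polyPart {lam : ι → ℝ} (hlam : ∀ i, lam i ≠ 0) (e : ι → ℝ) {Q : ℝ[X]}
    (hQ0 : Q.eval 0 = 0) : (polyPart lam e Q).eval 0 = ∑ i, e i * Q.divX.eval (lam i) := by
  rw [polyPart, eval_finsetSum]
  refine Finset.sum_congr rfl fun i _ => ?_
  have h := eval_eq_eval_add_mul_divByMonic Q (lam i) 0
  rw [hQ0, eval_eq_eval_divX_mul hQ0 (lam i)] at h
  rw [eval_mul, eval_C]
  exact congrArg _ (mul_left_cancel₀ (hlam i) (by linear_combination h))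

lemma sum_div_sub_mul_sum_div_add {lam : ι → ℝ} (x y : ι → ℝ) {z : ℝ}
    (hsum : ∀ i j, lam i + lam j ≠ 0) (hsub : ∀ i, z - lam i ≠ 0) (hadd : ∀ j, z + lam j ≠ 0) :
    (∑ i, x i / (z - lam i)) * ∑ j, y j / (z + lam j) =
      ∑ i, x i * (∑ j, y j / (lam i + lam j)) / (z - lam i) -
        ∑ j, y j * (∑ i, x i / (lam i + lam j)) / (z + lam j) := by
  have hterm (i j : ι) : x i / (z - lam i) * (y j / (z + lam j)) =
      x i * (y j / (lam i + lam j)) / (z - lam i) -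
        y j * (x i / (lam i + lam j)) / (z + lam j) := by
    field_simp [hsum i j, hsub i, hadd j]
    ring
  simp_rw [Finset.sum_mul_sum, hterm, Finset.sum_sub_distrib, Finset.mul_sum, Finset.sum_div]
  rw [Finset.sum_comm (f := fun i j => y j * (x i / (lam i + lam j)) / (z + lam j))]

lemma eventually_forall_lt (lam : ι → ℝ) : ∀ᶠ z : ℝ in atTop, 0 < z ∧ ∀ i, lam i < z :=
  (eventually_gt_atTop 0).and (eventually_all.2 fun i => eventually_gt_atTop (lam i))

lemma Polynomial.eval_eq_sum_fin {R : ℝ[X]} {k : ℕ} (hR : R.natDegree ≤ k) (t : ℝ) :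
    R.eval t = ∑ j : Fin (k + 1), R.coeff j * t ^ (j : ℕ) := by
  rw [eval_eq_sum_range' (Nat.lt_succ_of_le hR),
    Fin.sum_univ_eq_sum_range (fun j => R.coeff j * t ^ j)]

lemma Polynomial.exists_natDegree_le_coeff_eq {k : ℕ} (v : Fin (k + 1) → ℝ) :
    ∃ R : ℝ[X], R.natDegree ≤ k ∧ (fun j : Fin (k + 1) => R.coeff j) = v := by
  refine ⟨(degreeLTEquiv ℝ (k + 1)).symm v, ?_, (degreeLTEquiv ℝ (k + 1)).apply_symm_apply v⟩
  rw [natDegree_le_iff_degree_le, ← mem_degreeLE, ← degreeLT_succ_eq_degreeLE]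
  exact Submodule.coe_mem _

lemma Polynomial.existsUnique_coeff_succ {k : ℕ} (v : Fin (k + 1) → ℝ) :
    ∃! Q : ℝ[X], Q.natDegree ≤ k + 1 ∧ Q.eval 0 = 0 ∧
      (fun j : Fin (k + 1) => Q.coeff (j + 1)) = v := by
  obtain ⟨R, hR, hRv⟩ := exists_natDegree_le_coeff_eq v
  refine ⟨X * R, ⟨natDegree_mul_le.trans (by rw [natDegree_X]; omega), by simp,
    _root_.funext fun j => (coeff_X_mul _ _).trans (congrFun hRv j)⟩, ?_⟩
  rintro Q ⟨hQ, hQ0, hQv⟩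
  ext n
  rcases n with _ | n
  · simp [coeff_zero_eq_eval_zero, hQ0]
  · rw [coeff_X_mul]
    by_cases hn : n < k + 1
    · exact (congrFun hQv ⟨n, hn⟩).trans (congrFun hRv ⟨n, hn⟩).symm
    · rw [coeff_eq_zero_of_natDegree_lt (by omega), coeff_eq_zero_of_natDegree_lt (by omega)]

lemma Polynomial.eq_zero_of_eval_zero_of_forall_eval_eq_zero {lam : ι → ℝ}
    (hinj : Function.Injective lam) (hlam : ∀ a, lam a ≠ 0) {R : ℝ[X]}
    (hR : R.natDegree ≤ Fintype.card ι) (hR0 : R.eval 0 = 0) (hRlam : ∀ a, R.eval (lam a) = 0) :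
    R = 0 := by
  refine eq_zero_of_natDegree_lt_card_of_eval_eq_zero' R (insert 0 (Finset.univ.image lam))
    (fun t ht => ?_) ?_
  · rcases Finset.mem_insert.1 ht with rfl | ht
    · exact hR0
    · obtain ⟨a, -, rfl⟩ := Finset.mem_image.1 ht
      exact hRlam a
  · rw [Finset.card_insert_of_notMem (by simpa using hlam), Finset.card_image_of_injective _ hinj,
      Finset.card_univ]
    omega

namespace CubicString

variable (lam b : ι → ℝ) (M : ℝ)

noncomputable def c (i : ι) : ℝ := -∑ j, b j * b i / (lam j + lam i)

noncomputable def W (z : ℝ) : ℝ := ∑ i, b i / (z - lam i)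

noncomputable def Z (z : ℝ) : ℝ := -(1 / (2 * M * z)) + ∑ i, c lam b i / (z - lam i)

noncomputable def bimoment (i j : ℕ) : ℝ :=
  ∑ a, ∑ d, b a * b d * lam a ^ i * lam d ^ j / (lam a + lam d)

noncomputable def approxMatrix (k : ℕ) : Matrix (Fin (k + 1)) (Fin (k + 1)) ℝ :=
  fun i j => bimoment lam b i j + if (i : ℕ) = 0 ∧ (j : ℕ) = 0 then 1 / (2 * M) else 0

def IsApproximant (k : ℕ) (QPP : ℝ[X] × ℝ[X] × ℝ[X]) : Prop :=
  QPP.1.natDegree ≤ k + 1 ∧ QPP.2.1.natDegree ≤ k ∧ QPP.2.2.natDegree ≤ k ∧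
    QPP.1.eval 0 = 0 ∧ QPP.2.1.eval 0 = 0 ∧ QPP.2.2.eval 0 = 1 ∧
    (fun z => QPP.1.eval z * Z lam b M z - QPP.2.2.eval z) =O[atTop] (fun z : ℝ => z⁻¹) ∧
    (fun z => QPP.1.eval z * W lam b z - QPP.2.1.eval z) =O[atTop] (fun _ : ℝ => (1 : ℝ)) ∧
    (fun z => QPP.2.2.eval z + QPP.2.1.eval z * -W lam b (-z) + QPP.1.eval z * Z lam b M (-z))
      =O[atTop] (fun z : ℝ => (z ^ (k + 1))⁻¹)

/-- The `P̂` forced by `Q` through `Q Z - P̂ = O(z⁻¹)`. -/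
noncomputable def phatOf (Q : ℝ[X]) : ℝ[X] :=
  C (-(1 / (2 * M))) * Q.divX + polyPart lam (c lam b) Q

/-- The `P` forced by `Q` through `Q W - P = O(1)` and `P(0) = 0`. -/
noncomputable def pOf (Q : ℝ[X]) : ℝ[X] := polyPart lam b Q - C ((polyPart lam b Q).eval 0)

/-- `gramForm (X ^ i) (X ^ j)` is the bimoment `I i j`. -/
noncomputable def gramForm (S R : ℝ[X]) : ℝ :=
  cauchyForm lam (fun a => b a * S.eval (lam a)) (fun d => b d * R.eval (lam d))

lemma c_eq (j : ι) : c lam b j = -(b j * ∑ i, b i / (lam i + lam j)) := by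
  rw [c, Finset.mul_sum]
  exact congrArg _ (Finset.sum_congr rfl fun i _ => by ring)

lemma neg_W_neg (z : ℝ) : -W lam b (-z) = ∑ i, b i / (z + lam i) := by
  simp only [W, ← Finset.sum_neg_distrib, ← neg_add', div_neg, neg_neg]

lemma Z_neg (z : ℝ) : Z lam b M (-z) = 1 / (2 * M * z) - ∑ i, c lam b i / (z + lam i) := by
  simp only [Z, ← neg_add', div_neg, mul_neg, Finset.sum_neg_distrib, neg_neg]
  ring

lemma natDegree_phatOf_le {Q : ℝ[X]} {k : ℕ} (hQ : Q.natDegree ≤ k + 1) :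
    (phatOf lam b M Q).natDegree ≤ k := by
  refine (natDegree_add_le _ _).trans (max_le ((natDegree_C_mul_le _ _).trans ?_)
    (natDegree_polyPart_le lam _ hQ))
  rw [natDegree_divX_eq_natDegree_tsub_one]
  omega

lemma natDegree_pOf_le {Q : ℝ[X]} {k : ℕ} (hQ : Q.natDegree ≤ k + 1) :
    (pOf lam b Q).natDegree ≤ k :=
  (natDegree_sub_le _ _).trans (max_le (natDegree_polyPart_le lam b hQ) (by simp))

lemma eval_zero_pOf (Q : ℝ[X]) : (pOf lam b Q).eval 0 = 0 := by
  simp [pOf]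

lemma eval_mul_Z {Q : ℝ[X]} (hQ0 : Q.eval 0 = 0) {z : ℝ} (hz0 : z ≠ 0) (hz : ∀ i, z ≠ lam i) :
    Q.eval z * Z lam b M z =
      (phatOf lam b M Q).eval z + ∑ i, c lam b i * Q.eval (lam i) / (z - lam i) := by
  rw [Z, mul_add, eval_mul_sum_div_sub lam _ Q hz, phatOf, eval_add, eval_mul, eval_C,
    eval_eq_eval_divX_mul hQ0 z, ← add_assoc]
  congr 2
  rw [div_mul_eq_div_div, mul_comm (Q.divX.eval z)]
  field_simp

lemma gramForm_comm (S R : ℝ[X]) : gramForm lam b S R = gramForm lam b R S := by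
  rw [gramForm, gramForm, cauchyForm, cauchyForm, Finset.sum_comm]
  exact Finset.sum_congr rfl fun d _ => Finset.sum_congr rfl fun a _ => by rw [add_comm]; ring

lemma sum_coeff_mul_gramForm_X_pow {R : ℝ[X]} {k : ℕ} (hR : R.natDegree ≤ k) (S : ℝ[X]) :
    ∑ j : Fin (k + 1), R.coeff j * gramForm lam b S (X ^ (j : ℕ)) = gramForm lam b S R := by
  simp only [gramForm, cauchyForm, eval_pow, eval_X, eval_eq_sum_fin hR, Finset.mul_sum,
    Finset.sum_div]
  rw [Finset.sum_comm]
  refine Finset.sum_congr rfl fun a _ => ?_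
  rw [Finset.sum_comm]
  exact Finset.sum_congr rfl fun d _ => Finset.sum_congr rfl fun j _ => by ring

lemma approxMatrix_mulVec {R : ℝ[X]} {k : ℕ} (hR : R.natDegree ≤ k) (i : Fin (k + 1)) :
    (approxMatrix lam b M k *ᵥ fun j => R.coeff j) i =
      gramForm lam b (X ^ (i : ℕ)) R + if (i : ℕ) = 0 then R.eval 0 / (2 * M) else 0 := by
  have hbimoment (j : ℕ) : bimoment lam b i j = gramForm lam b (X ^ (i : ℕ)) (X ^ j) :=
    Finset.sum_congr rfl fun a _ => Finset.sum_congr rfl fun d _ => by simp; ring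
  simp only [Matrix.mulVec, dotProduct, approxMatrix, add_mul, Finset.sum_add_distrib, hbimoment]
  rw [← sum_coeff_mul_gramForm_X_pow lam b hR]
  congr 1
  · exact Finset.sum_congr rfl fun j _ => mul_comm _ _
  · simp [Fin.sum_univ_succ, coeff_zero_eq_eval_zero, div_eq_mul_inv, mul_comm]

lemma dotProduct_approxMatrix_mulVec {R : ℝ[X]} {k : ℕ} (hR : R.natDegree ≤ k) :
    (fun j : Fin (k + 1) => R.coeff j) ⬝ᵥ (approxMatrix lam b M k *ᵥ fun j => R.coeff j) =
      gramForm lam b R R + R.eval 0 ^ 2 / (2 * M) := by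
  simp only [dotProduct, approxMatrix_mulVec lam b M hR, mul_add, Finset.sum_add_distrib,
    gramForm_comm lam b (X ^ _), sum_coeff_mul_gramForm_X_pow lam b hR]
  simp [coeff_zero_eq_eval_zero, sq, mul_div_assoc]

variable {lam}

lemma mul_neg_W_neg (hlam : ∀ i, 0 < lam i) (e : ι → ℝ) {z : ℝ} (hz : ∀ i, lam i < z) :
    (∑ i, b i * e i / (z - lam i)) * -W lam b (-z) =
      -∑ i, c lam b i * e i / (z - lam i) -
        ∑ j, b j * (∑ i, b i * e i / (lam i + lam j)) / (z + lam j) := by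
  rw [neg_W_neg, sum_div_sub_mul_sum_div_add _ _ (fun i j => by linarith [hlam i, hlam j])
    (fun i => by linarith [hz i]) (fun j => by linarith [hz j, hlam j]),
    ← Finset.sum_neg_distrib]
  congr 1
  refine Finset.sum_congr rfl fun i _ => ?_
  have hsymm : ∑ j, b j / (lam j + lam i) = ∑ j, b j / (lam i + lam j) :=
    Finset.sum_congr rfl fun j _ => by rw [add_comm]
  rw [c_eq, hsymm]
  ring

lemma Z_neg_eq (hlam : ∀ i, 0 < lam i) {z : ℝ} (hz : ∀ i, lam i < z) :
    Z lam b M (-z) = -Z lam b M z - W lam b z * -W lam b (-z) := by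
  have hW := mul_neg_W_neg b hlam (fun _ => 1) hz
  simp only [mul_one] at hW
  rw [W, hW, Z_neg, Z]
  have hc (j : ι) : b j * ∑ i, b i / (lam i + lam j) = -c lam b j := by rw [c_eq, neg_neg]
  simp only [hc, neg_div, Finset.sum_neg_distrib]
  ring

lemma approx_error_eq (hlam : ∀ i, 0 < lam i) (Q P Phat : ℝ[X]) {z : ℝ} (hz : ∀ i, lam i < z) :
    Phat.eval z + P.eval z * -W lam b (-z) + Q.eval z * Z lam b M (-z) =
      -(Q.eval z * Z lam b M z - Phat.eval z) -
        -W lam b (-z) * (Q.eval z * W lam b z - P.eval z) := by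
  rw [Z_neg_eq b M hlam hz]
  ring

lemma isBigO_Z_iff {Q : ℝ[X]} (hQ0 : Q.eval 0 = 0) (Phat : ℝ[X]) :
    (fun z => Q.eval z * Z lam b M z - Phat.eval z) =O[atTop] (fun z : ℝ => z⁻¹) ↔
      Phat = phatOf lam b M Q := by
  have hrem := isBigO_sum_div_sub (fun i => c lam b i * Q.eval (lam i)) lam
  have heq : (fun z => Q.eval z * Z lam b M z - Phat.eval z) =ᶠ[atTop] fun z =>
      (phatOf lam b M Q - Phat).eval z + ∑ i, c lam b i * Q.eval (lam i) / (z - lam i) := by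
    filter_upwards [eventually_forall_lt lam] with z hz
    rw [eval_mul_Z lam b M hQ0 hz.1.ne' fun i => (hz.2 i).ne', eval_sub]
    ring
  rw [isBigO_congr heq EventuallyEq.rfl]
  constructor
  · intro h
    exact (sub_eq_zero.1 (eq_zero_of_isBigO_inv
      ((h.sub hrem).congr_left fun z => add_sub_cancel_right _ _))).symm
  · rintro rfl
    simpa using hrem

lemma isBigO_W_iff (Q P : ℝ[X]) :
    (P.eval 0 = 0 ∧ (fun z => Q.eval z * W lam b z - P.eval z) =O[atTop] fun _ : ℝ => (1 : ℝ)) ↔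
      P = pOf lam b Q := by
  have hrem := (isBigO_sum_div_sub (fun i => b i * Q.eval (lam i)) lam).trans
    (tendsto_inv_atTop_zero.isBigO_one ℝ)
  have heq : (fun z => Q.eval z * W lam b z - P.eval z) =ᶠ[atTop] fun z =>
      (polyPart lam b Q - P).eval z + ∑ i, b i * Q.eval (lam i) / (z - lam i) := by
    filter_upwards [eventually_forall_lt lam] with z hz
    rw [W, eval_mul_sum_div_sub lam b Q fun i => (hz.2 i).ne', eval_sub]
    ring
  rw [isBigO_congr heq EventuallyEq.rfl]
  constructor
  · rintro ⟨hP0, h⟩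
    have hconst := eq_C_of_isBigO_one ((h.sub hrem).congr_left fun z => add_sub_cancel_right _ _)
    rw [eval_sub, hP0, sub_zero] at hconst
    rw [pOf, ← hconst]
    ring
  · rintro rfl
    refine ⟨eval_zero_pOf lam b Q, ?_⟩
    simpa [pOf] using (isBigO_const_const _ one_ne_zero atTop).add hrem

lemma approx_error_eq_sum (hlam : ∀ i, 0 < lam i) {Q : ℝ[X]} (hQ0 : Q.eval 0 = 0) {z : ℝ}
    (hz0 : z ≠ 0) (hz : ∀ i, lam i < z) :
    (phatOf lam b M Q).eval z + (pOf lam b Q).eval z * -W lam b (-z) + Q.eval z * Z lam b M (-z) =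
      ∑ j, -(b j * lam j * ∑ i, b i * Q.divX.eval (lam i) / (lam i + lam j)) / (z + lam j) := by
  have hZ : Q.eval z * Z lam b M z - (phatOf lam b M Q).eval z =
      ∑ i, c lam b i * Q.eval (lam i) / (z - lam i) := by
    rw [eval_mul_Z lam b M hQ0 hz0 fun i => (hz i).ne']
    ring
  have hW : Q.eval z * W lam b z - (pOf lam b Q).eval z =
      ∑ i, b i * Q.eval (lam i) / (z - lam i) + (polyPart lam b Q).eval 0 := by
    rw [W, eval_mul_sum_div_sub lam b Q fun i => (hz i).ne', pOf, eval_sub, eval_C]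
    ring
  have hmoment (j : ι) : ∑ i, b i * Q.eval (lam i) / (lam i + lam j) - (polyPart lam b Q).eval 0 =
      -(lam j * ∑ i, b i * Q.divX.eval (lam i) / (lam i + lam j)) := by
    rw [eval_zero_polyPart (fun i => (hlam i).ne') b hQ0, Finset.mul_sum,
      ← Finset.sum_neg_distrib, ← Finset.sum_sub_distrib]
    refine Finset.sum_congr rfl fun i _ => ?_
    rw [eval_eq_eval_divX_mul hQ0]
    field_simp [(add_pos (hlam i) (hlam j)).ne']
    ring
  rw [approx_error_eq b M hlam _ _ _ hz, hZ, hW, mul_add, mul_comm (-W lam b (-z)),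
    mul_neg_W_neg b hlam _ hz, neg_W_neg, Finset.sum_mul,
    show ∀ g S T : ℝ, -g - (-g - S + T) = S - T from fun _ _ _ => by ring,
    ← Finset.sum_sub_distrib]
  exact Finset.sum_congr rfl fun j _ => by linear_combination b j / (z + lam j) * hmoment j

lemma isBigO_approx_error_iff (hlam : ∀ i, 0 < lam i) {Q : ℝ[X]} (hQ0 : Q.eval 0 = 0) (k : ℕ) :
    (fun z => (phatOf lam b M Q).eval z + (pOf lam b Q).eval z * -W lam b (-z) +
        Q.eval z * Z lam b M (-z)) =O[atTop] (fun z : ℝ => (z ^ (k + 1))⁻¹) ↔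
      ∀ m < k, gramForm lam b (X ^ (m + 1)) Q.divX = 0 := by
  have heq : (fun z => (phatOf lam b M Q).eval z + (pOf lam b Q).eval z * -W lam b (-z) +
      Q.eval z * Z lam b M (-z)) =ᶠ[atTop] fun z =>
        ∑ j, -(b j * lam j * ∑ i, b i * Q.divX.eval (lam i) / (lam i + lam j)) / (z + lam j) := by
    filter_upwards [eventually_forall_lt lam] with z hz
    exact approx_error_eq_sum b M hlam hQ0 hz.1.ne' hz.2
  rw [isBigO_congr heq EventuallyEq.rfl, isBigO_sum_div_add_iff]
  refine forall₂_congr fun m _ => ?_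
  rw [← neg_eq_zero (a := gramForm _ _ _ _)]
  refine Eq.congr_left ?_
  simp only [gramForm, cauchyForm, eval_pow, eval_X, ← Finset.sum_neg_distrib, Finset.sum_mul,
    Finset.mul_sum]
  refine Finset.sum_congr rfl fun j _ => Finset.sum_congr rfl fun i _ => ?_
  rw [add_comm (lam i)]
  ring

lemma eval_zero_phatOf (hlam : ∀ i, 0 < lam i) {Q : ℝ[X]} (hQ0 : Q.eval 0 = 0) :
    (phatOf lam b M Q).eval 0 = -(gramForm lam b 1 Q.divX + Q.divX.eval 0 / (2 * M)) := by
  have hc (d : ι) : c lam b d * Q.divX.eval (lam d) =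
      -∑ a, b a * eval (lam a) 1 * (b d * Q.divX.eval (lam d)) / (lam a + lam d) := by
    rw [c_eq, neg_mul, Finset.mul_sum, Finset.sum_mul]
    exact congrArg _ (Finset.sum_congr rfl fun a _ => by rw [eval_one]; ring)
  rw [phatOf, eval_add, eval_mul, eval_C, eval_zero_polyPart (fun i => (hlam i).ne') _ hQ0,
    gramForm, cauchyForm, Finset.sum_comm, Finset.sum_congr rfl fun d _ => hc d,
    Finset.sum_neg_distrib]
  ring

lemma approxMatrix_mulVec_eq_iff (hlam : ∀ i, 0 < lam i) {k : ℕ} {Q : ℝ[X]}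
    (hQ : Q.natDegree ≤ k + 1) (hQ0 : Q.eval 0 = 0) :
    (approxMatrix lam b M k *ᵥ fun j => Q.coeff (j + 1)) =
      (fun i : Fin (k + 1) => if (i : ℕ) = 0 then (-1 : ℝ) else 0) ↔
      (phatOf lam b M Q).eval 0 = 1 ∧ ∀ m < k, gramForm lam b (X ^ (m + 1)) Q.divX = 0 := by
  have hR : Q.divX.natDegree ≤ k := by rw [natDegree_divX_eq_natDegree_tsub_one]; omega
  simp only [← coeff_divX, funext_iff, Fin.forall_fin_succ, approxMatrix_mulVec lam b M hR,
    eval_zero_phatOf b M hlam hQ0, Fin.forall_iff]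
  simp only [Fin.val_zero, Fin.val_succ, pow_zero, if_true, Nat.add_one_ne_zero, if_false,
    add_zero, neg_eq_iff_eq_neg]

lemma approxMatrix_isUnit (hlam : ∀ i, 0 < lam i) (hinj : Function.Injective lam)
    (hb : ∀ i, b i ≠ 0) (hM : 0 < M) {k : ℕ} (hk : k ≤ Fintype.card ι) :
    IsUnit (approxMatrix lam b M k) := by
  rw [Matrix.isUnit_iff_isUnit_det, isUnit_iff_ne_zero, ne_eq, ← Matrix.exists_mulVec_eq_zero_iff]
  rintro ⟨v, hv0, hv⟩
  obtain ⟨R, hR, rfl⟩ := exists_natDegree_le_coeff_eq v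
  have hquad := dotProduct_approxMatrix_mulVec lam b M hR
  rw [hv, dotProduct_zero] at hquad
  have hgram : 0 ≤ gramForm lam b R R := cauchyForm_self_nonneg hlam _
  have hconst : 0 ≤ R.eval 0 ^ 2 / (2 * M) := by positivity
  have hx := eq_zero_of_cauchyForm_self_eq_zero hlam hinj (x := fun a => b a * R.eval (lam a))
    (show gramForm lam b R R = 0 by linarith)
  have hR0 : R.eval 0 = 0 := by
    have : R.eval 0 ^ 2 / (2 * M) = 0 := by linarith
    simpa [hM.ne'] using this
  have hRzero := eq_zero_of_eval_zero_of_forall_eval_eq_zero hinj (fun a => (hlam a).ne')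
    (hR.trans hk) hR0 fun a => by simpa [hb a] using congrFun hx a
  exact hv0 (by rw [hRzero]; rfl)

lemma isApproximant_iff (hlam : ∀ i, 0 < lam i) (k : ℕ) (Q P Phat : ℝ[X]) :
    IsApproximant lam b M k (Q, P, Phat) ↔
      Q.natDegree ≤ k + 1 ∧ Q.eval 0 = 0 ∧ P = pOf lam b Q ∧ Phat = phatOf lam b M Q ∧
        (approxMatrix lam b M k *ᵥ fun j => Q.coeff (j + 1)) =
          fun i : Fin (k + 1) => if (i : ℕ) = 0 then (-1 : ℝ) else 0 := by
  constructor
  · simp only [IsApproximant]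
    rintro ⟨hQ, -, -, hQ0, hP0, hPhat1, hZ, hW, herr⟩
    obtain rfl := (isBigO_Z_iff b M hQ0 Phat).1 hZ
    obtain rfl := (isBigO_W_iff b Q P).1 ⟨hP0, hW⟩
    exact ⟨hQ, hQ0, rfl, rfl, (approxMatrix_mulVec_eq_iff b M hlam hQ hQ0).2
      ⟨hPhat1, (isBigO_approx_error_iff b M hlam hQ0 k).1 herr⟩⟩
  · rintro ⟨hQ, hQ0, rfl, rfl, hsys⟩
    obtain ⟨hPhat1, hmoments⟩ := (approxMatrix_mulVec_eq_iff b M hlam hQ hQ0).1 hsys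
    exact ⟨hQ, natDegree_pOf_le lam b hQ, natDegree_phatOf_le lam b M hQ, hQ0,
      eval_zero_pOf lam b Q, hPhat1, (isBigO_Z_iff b M hQ0 _).2 rfl,
      ((isBigO_W_iff b Q _).2 rfl).2, (isBigO_approx_error_iff b M hlam hQ0 k).2 hmoments⟩

end CubicString

theorem stmt16_general (n : ℕ) (lam b : Fin (n - 1) → ℝ)
    (hmono : StrictMono lam) (hpos : ∀ i, 0 < lam i) (hb : ∀ i, b i < 0)
    (M : ℝ) (hM : 0 < M) (k : ℕ) (hk : k ≤ n - 1)
    (c : Fin (n - 1) → ℝ)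
    (hc : ∀ i, c i = -∑ j, b j * b i / (lam j + lam i))
    (W Z Ws Zs : ℝ → ℝ)
    (hW : ∀ z, W z = ∑ i, b i / (z - lam i))
    (hZ : ∀ z, Z z = -(1 / (2 * M * z)) + ∑ i, c i / (z - lam i))
    (hWs : ∀ z, Ws z = -W (-z)) (hZs : ∀ z, Zs z = Z (-z))
    (I : ℕ → ℕ → ℝ)
    (hI : ∀ i j, I i j = ∑ a, ∑ d, b a * b d * lam a ^ i * lam d ^ j / (lam a + lam d)) :
    (∃! QPP : Polynomial ℝ × Polynomial ℝ × Polynomial ℝ,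
      QPP.1.natDegree ≤ k + 1 ∧ QPP.2.1.natDegree ≤ k ∧ QPP.2.2.natDegree ≤ k ∧
      QPP.1.eval 0 = 0 ∧ QPP.2.1.eval 0 = 0 ∧ QPP.2.2.eval 0 = 1 ∧
      (fun z => QPP.1.eval z * Z z - QPP.2.2.eval z) =O[atTop] (fun z : ℝ => z⁻¹) ∧
      (fun z => QPP.1.eval z * W z - QPP.2.1.eval z) =O[atTop] (fun _ : ℝ => (1 : ℝ)) ∧
      (fun z => QPP.2.2.eval z + QPP.2.1.eval z * Ws z + QPP.1.eval z * Zs z)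
        =O[atTop] (fun z : ℝ => (z ^ (k + 1))⁻¹)) ∧
    (∀ Q P Phat : Polynomial ℝ,
      Q.natDegree ≤ k + 1 → P.natDegree ≤ k → Phat.natDegree ≤ k →
      Q.eval 0 = 0 → P.eval 0 = 0 → Phat.eval 0 = 1 →
      (fun z => Q.eval z * Z z - Phat.eval z) =O[atTop] (fun z : ℝ => z⁻¹) →
      (fun z => Q.eval z * W z - P.eval z) =O[atTop] (fun _ : ℝ => (1 : ℝ)) →
      (fun z => Phat.eval z + P.eval z * Ws z + Q.eval z * Zs z)
        =O[atTop] (fun z : ℝ => (z ^ (k + 1))⁻¹) →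
      ∀ i : Fin (k + 1),
        ∑ j : Fin (k + 1),
          (I (i : ℕ) (j : ℕ) + if (i : ℕ) = 0 ∧ (j : ℕ) = 0 then 1 / (2 * M) else 0)
            * Q.coeff ((j : ℕ) + 1)
          = if (i : ℕ) = 0 then -1 else 0) := by
  obtain rfl : c = CubicString.c lam b := funext hc
  obtain rfl : W = CubicString.W lam b := funext hW
  obtain rfl : Z = CubicString.Z lam b M := funext hZ
  obtain rfl : Ws = fun z => -CubicString.W lam b (-z) := funext hWs
  obtain rfl : Zs = fun z => CubicString.Z lam b M (-z) := funext hZs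
  obtain rfl : I = CubicString.bimoment lam b := funext₂ hI
  have happrox := CubicString.isApproximant_iff b M hpos k
  have hA := CubicString.approxMatrix_isUnit b M hpos hmono.injective (fun i => (hb i).ne) hM
    (k := k) (by simpa using hk)
  obtain ⟨v, hv⟩ := Matrix.mulVec_surjective_iff_isUnit.2 hA
    fun i : Fin (k + 1) => if (i : ℕ) = 0 then (-1 : ℝ) else 0
  obtain ⟨Q, ⟨hQ, hQ0, rfl⟩, hQ_unique⟩ := Polynomial.existsUnique_coeff_succ v
  refine ⟨⟨(Q, _, _), (happrox Q _ _).2 ⟨hQ, hQ0, rfl, rfl, hv⟩, ?_⟩,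
    fun Q P Phat h₁ h₂ h₃ h₄ h₅ h₆ h₇ h₈ h₉ =>
      congrFun ((happrox Q P Phat).1 ⟨h₁, h₂, h₃, h₄, h₅, h₆, h₇, h₈, h₉⟩).2.2.2.2⟩
  rintro ⟨Q', P', Phat'⟩ h
  obtain ⟨hQ', hQ'0, rfl, rfl, hsys⟩ := (happrox Q' P' Phat').1 h
  obtain rfl := hQ_unique Q'
    ⟨hQ', hQ'0, Matrix.mulVec_injective_iff_isUnit.2 hA (hsys.trans hv.symm)⟩
  rfl

/-- **The Type I simultaneous rational approximation problem.**
Given spectral data `0 < λ_1 < ⋯ < λ_{n−1}`, `b_i < 0`, `M > 0`, with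
`c_i = −Σ_j b_j b_i/(λ_j + λ_i)`, `W(z) = Σ b_i/(z − λ_i)`,
`Z(z) = −1/(2Mz) + Σ c_i/(z − λ_i)`, `W*(z) = −W(−z)`, `Z*(z) = Z(−z)`:
for fixed `0 ≤ k ≤ n−1` there are unique polynomials `Q, P, P̂` of degrees
`≤ k+1, k, k` with `Q(0) = 0`, `P(0) = 0`, `P̂(0) = 1` such that `QZ − P̂ = O(z⁻¹)`,
`QW − P = O(1)` and `P̂ + P W* + Q Z* = O(z^{−(k+1)})` as `z → ∞`; moreover the
coefficients `q_j = Q.coeff j` satisfy the `(k+1)×(k+1)` system whose first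
equation is `(I_{00} + 1/(2M)) q_1 + Σ_{j=2}^{k+1} I_{0,j−1} q_j = −1` and whose
remaining equations are `Σ_{j=1}^{k+1} I_{i,j−1} q_j = 0` for `i = 1, …, k`,
where `I_{ij} = Σ_{a,d} b_a b_d λ_a^i λ_d^j/(λ_a + λ_d)`. -/
theorem stmt16 (n : ℕ) (hn : 2 ≤ n) (lam b : Fin (n - 1) → ℝ)
    (hmono : StrictMono lam) (hpos : ∀ i, 0 < lam i) (hb : ∀ i, b i < 0)
    (M : ℝ) (hM : 0 < M) (k : ℕ) (hk : k ≤ n - 1)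
    (c : Fin (n - 1) → ℝ)
    (hc : ∀ i, c i = -∑ j, b j * b i / (lam j + lam i))
    (W Z Ws Zs : ℝ → ℝ)
    (hW : ∀ z, W z = ∑ i, b i / (z - lam i))
    (hZ : ∀ z, Z z = -(1 / (2 * M * z)) + ∑ i, c i / (z - lam i))
    (hWs : ∀ z, Ws z = -W (-z)) (hZs : ∀ z, Zs z = Z (-z))
    (I : ℕ → ℕ → ℝ)
    (hI : ∀ i j, I i j = ∑ a, ∑ d, b a * b d * lam a ^ i * lam d ^ j / (lam a + lam d)) :
    (∃! QPP : Polynomial ℝ × Polynomial ℝ × Polynomial ℝ,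
      QPP.1.natDegree ≤ k + 1 ∧ QPP.2.1.natDegree ≤ k ∧ QPP.2.2.natDegree ≤ k ∧
      QPP.1.eval 0 = 0 ∧ QPP.2.1.eval 0 = 0 ∧ QPP.2.2.eval 0 = 1 ∧
      (fun z => QPP.1.eval z * Z z - QPP.2.2.eval z) =O[atTop] (fun z : ℝ => z⁻¹) ∧
      (fun z => QPP.1.eval z * W z - QPP.2.1.eval z) =O[atTop] (fun _ : ℝ => (1 : ℝ)) ∧
      (fun z => QPP.2.2.eval z + QPP.2.1.eval z * Ws z + QPP.1.eval z * Zs z)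
        =O[atTop] (fun z : ℝ => (z ^ (k + 1))⁻¹)) ∧
    (∀ Q P Phat : Polynomial ℝ,
      Q.natDegree ≤ k + 1 → P.natDegree ≤ k → Phat.natDegree ≤ k →
      Q.eval 0 = 0 → P.eval 0 = 0 → Phat.eval 0 = 1 →
      (fun z => Q.eval z * Z z - Phat.eval z) =O[atTop] (fun z : ℝ => z⁻¹) →
      (fun z => Q.eval z * W z - P.eval z) =O[atTop] (fun _ : ℝ => (1 : ℝ)) →
      (fun z => Phat.eval z + P.eval z * Ws z + Q.eval z * Zs z)
        =O[atTop] (fun z : ℝ => (z ^ (k + 1))⁻¹) →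
      ∀ i : Fin (k + 1),
        ∑ j : Fin (k + 1),
          (I (i : ℕ) (j : ℕ) + if (i : ℕ) = 0 ∧ (j : ℕ) = 0 then 1 / (2 * M) else 0)
            * Q.coeff ((j : ℕ) + 1)
          = if (i : ℕ) = 0 then -1 else 0) :=
  stmt16_general n lam b hmono hpos hb M hM k hk c hc W Z Ws Zs hW hZ hWs hZs I hI
end

section
/- Let n ≥ 2, let 0 < λ_1 < ⋯ < λ_{n−1}, b_1, …, b_{n−1} < 0 and M > 0 be given, and define c_k, W, Z, W*, Z* as in the Type I approximation problem. Let Q, P, P̂ be the unique polynomials of the Type I approximation problem with k = n−1 (deg Q ≤ n, deg P ≤ n−1, deg P̂ ≤ n−1, Q(0) = P(0) = 0, P̂(0) = 1, with Q Z − P̂ = O(z^{−1}), Q W − P = O(1), and P̂ + P W* + Q Z* = O(z^{−n}) as z → ∞). Then Q(z) = −2Mz ∏_{j=1}^{n−1} (1 − z/λ_j), and the approximation is exact: Z(z) = P̂(z)/Q(z) and W(z) = P(z)/Q(z) as rational functions. -/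
open Polynomial Filter Asymptotics

lemma aux_deg_le (p : Polynomial ℝ) (k : ℕ)
    (h : (fun z => p.eval z) =O[atTop] fun z : ℝ => z ^ k) : p.natDegree ≤ k := by
  by_contra hlt
  push_neg at hlt
  have hp : p ≠ 0 := by rintro rfl; simp at hlt
  have h1 : (fun z : ℝ => p.leadingCoeff * z ^ p.natDegree) =O[atTop] (fun z : ℝ => z ^ k) :=
    (p.isEquivalent_atTop_lead.symm.isBigO).trans h
  have h2 : (fun z : ℝ => z ^ p.natDegree) =O[atTop] (fun z : ℝ => z ^ k) := by
    rwa [isBigO_const_mul_left_iff (leadingCoeff_ne_zero.2 hp)] at h1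
  have h3 : (fun z : ℝ => z ^ k) =o[atTop] (fun z : ℝ => z ^ p.natDegree) :=
    isLittleO_pow_pow_atTop_of_lt hlt
  have h4 := h2.trans_isLittleO h3
  have h5 : ∃ᶠ z : ℝ in atTop, z ^ p.natDegree ≠ 0 :=
    ((eventually_gt_atTop (0:ℝ)).mono fun z hz => pow_ne_zero _ hz.ne').frequently
  exact isLittleO_irrefl h5 h4

lemma aux_eval_bigO (p : Polynomial ℝ) (k : ℕ) (hd : p.natDegree ≤ k) :
    (fun z => p.eval z) =O[atTop] fun z : ℝ => z ^ k := by
  have h := Polynomial.isBigO_of_degree_le p (X ^ k : Polynomial ℝ)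
    (le_trans (degree_le_natDegree) (by
      simpa [degree_X_pow] using (by exact_mod_cast hd : (p.natDegree : WithBot ℕ) ≤ (k : WithBot ℕ))))
  simpa using h

lemma aux_zero_of_roots (p : Polynomial ℝ) (s : Finset ℝ)
    (hdeg : p.natDegree < s.card) (hroots : ∀ x ∈ s, p.eval x = 0) : p = 0 := by
  by_contra hp
  have hsub : s ⊆ p.roots.toFinset := by
    intro x hx
    rw [Multiset.mem_toFinset, mem_roots hp]
    exact hroots x hx
  have := (Finset.card_le_card hsub).trans
    ((Multiset.toFinset_card_le _).trans (p.card_roots'))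
  omega

lemma aux_prod_sum {m : ℕ} (lam a : Fin m → ℝ) (z : ℝ) (hz : ∀ i, z - lam i ≠ 0) :
    (∏ i, (z - lam i)) * (∑ i, a i / (z - lam i))
      = ∑ i, a i * ∏ j ∈ Finset.univ.erase i, (z - lam j) := by
  rw [Finset.mul_sum]
  refine Finset.sum_congr rfl fun i _ => ?_
  rw [← Finset.mul_prod_erase Finset.univ _ (Finset.mem_univ i)]
  field_simp [hz i]

lemma aux_prod_sum' {m : ℕ} (lam a : Fin m → ℝ) (z : ℝ) (hz : ∀ i, z + lam i ≠ 0) :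
    (∏ i, (z + lam i)) * (∑ i, a i / (z + lam i))
      = ∑ i, a i * ∏ j ∈ Finset.univ.erase i, (z + lam j) := by
  rw [Finset.mul_sum]
  refine Finset.sum_congr rfl fun i _ => ?_
  rw [← Finset.mul_prod_erase Finset.univ _ (Finset.mem_univ i)]
  field_simp [hz i]

lemma aux_key {m : ℕ} (lam b c : Fin m → ℝ) (hpos : ∀ i, 0 < lam i)
    (hc : ∀ i, c i = -∑ j, b j * b i / (lam j + lam i)) (z : ℝ)
    (hzm : ∀ i, z - lam i ≠ 0) (hzp : ∀ i, z + lam i ≠ 0) :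
    (∑ i, c i / (z - lam i)) - (∑ i, c i / (z + lam i))
      + (∑ i, b i / (z - lam i)) * (∑ i, b i / (z + lam i)) = 0 := by
  set F : Fin m → Fin m → ℝ := fun i j =>
    (-(b j * b i / (lam j + lam i))) / (z - lam i)
      - (-(b j * b i / (lam j + lam i))) / (z + lam i)
      + (b i / (z - lam i)) * (b j / (z + lam j)) with hF
  have hlz : ∀ i j : Fin m, lam i + lam j ≠ 0 := fun i j =>
    ne_of_gt (by have := hpos i; have := hpos j; linarith)
  have hanti : ∀ i j, F i j + F j i = 0 := by
    intro i j
    rw [hF]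
    field_simp [hzm i, hzm j, hzp i, hzp j, hlz i j, hlz j i]
    ring
  have hmain : (∑ i, c i / (z - lam i)) - (∑ i, c i / (z + lam i))
      + (∑ i, b i / (z - lam i)) * (∑ i, b i / (z + lam i)) = ∑ i, ∑ j, F i j := by
    rw [Finset.sum_mul_sum]
    have e1 : (∑ i, c i / (z - lam i))
        = ∑ i, ∑ j, (-(b j * b i / (lam j + lam i))) / (z - lam i) := by
      refine Finset.sum_congr rfl fun i _ => ?_
      rw [hc i, neg_div, Finset.sum_div, ← Finset.sum_neg_distrib]
      simp [neg_div]
    have e2 : (∑ i, c i / (z + lam i))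
        = ∑ i, ∑ j, (-(b j * b i / (lam j + lam i))) / (z + lam i) := by
      refine Finset.sum_congr rfl fun i _ => ?_
      rw [hc i, neg_div, Finset.sum_div, ← Finset.sum_neg_distrib]
      simp [neg_div]
    rw [e1, e2, ← Finset.sum_sub_distrib, ← Finset.sum_add_distrib]
    refine Finset.sum_congr rfl fun i _ => ?_
    rw [← Finset.sum_sub_distrib, ← Finset.sum_add_distrib]
  rw [hmain]
  have h2 : ∑ i, ∑ j, (F i j + F j i) = 0 :=
    Finset.sum_eq_zero fun i _ => Finset.sum_eq_zero fun j _ => hanti i j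
  have h3 : ∑ i : Fin m, ∑ j : Fin m, F j i = ∑ i : Fin m, ∑ j : Fin m, F i j :=
    Finset.sum_comm
  have h4 : ∑ i : Fin m, ∑ j : Fin m, (F i j + F j i)
      = (∑ i : Fin m, ∑ j : Fin m, F i j) + ∑ i : Fin m, ∑ j : Fin m, F j i := by
    rw [← Finset.sum_add_distrib]
    exact Finset.sum_congr rfl fun i _ => by rw [← Finset.sum_add_distrib]
  rw [h3, h2] at h4
  linarith

/-- **The last Type I approximation is exact.**  For spectral data
`0 < λ_1 < ⋯ < λ_{n−1}`, `b_i < 0`, `M > 0`, with `c_i = −Σ_j b_j b_i/(λ_j + λ_i)`,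
`W(z) = Σ b_i/(z − λ_i)`, `Z(z) = −1/(2Mz) + Σ c_i/(z − λ_i)`, `W*(z) = −W(−z)`,
`Z*(z) = Z(−z)`: if `Q, P, P̂` solve the Type I approximation problem with
`k = n−1` (degrees `≤ n, n−1, n−1`, `Q(0) = P(0) = 0`, `P̂(0) = 1`,
`QZ − P̂ = O(z⁻¹)`, `QW − P = O(1)`, `P̂ + P W* + Q Z* = O(z^{−n})`), then
`Q(z) = −2Mz ∏_{j=1}^{n−1} (1 − z/λ_j)` and the approximation is exact:
`Z = P̂/Q` and `W = P/Q` wherever the denominators are defined. -/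
theorem stmt17 (n : ℕ) (hn : 2 ≤ n) (lam b : Fin (n - 1) → ℝ)
    (hmono : StrictMono lam) (hpos : ∀ i, 0 < lam i) (hb : ∀ i, b i < 0)
    (M : ℝ) (hM : 0 < M)
    (c : Fin (n - 1) → ℝ)
    (hc : ∀ i, c i = -∑ j, b j * b i / (lam j + lam i))
    (W Z Ws Zs : ℝ → ℝ)
    (hW : ∀ z, W z = ∑ i, b i / (z - lam i))
    (hZ : ∀ z, Z z = -(1 / (2 * M * z)) + ∑ i, c i / (z - lam i))
    (hWs : ∀ z, Ws z = -W (-z)) (hZs : ∀ z, Zs z = Z (-z))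
    (Q P Phat : Polynomial ℝ)
    (hdQ : Q.natDegree ≤ n) (hdP : P.natDegree ≤ n - 1) (hdPhat : Phat.natDegree ≤ n - 1)
    (hQ0 : Q.eval 0 = 0) (hP0 : P.eval 0 = 0) (hPhat0 : Phat.eval 0 = 1)
    (happroxZ : (fun z => Q.eval z * Z z - Phat.eval z) =O[atTop] (fun z : ℝ => z⁻¹))
    (happroxW : (fun z => Q.eval z * W z - P.eval z) =O[atTop] (fun _ : ℝ => (1 : ℝ)))
    (hsym : (fun z => Phat.eval z + P.eval z * Ws z + Q.eval z * Zs z)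
        =O[atTop] (fun z : ℝ => (z ^ n)⁻¹)) :
    Q = Polynomial.C (-2 * M) * Polynomial.X *
        ∏ j : Fin (n - 1), (1 - Polynomial.C (lam j)⁻¹ * Polynomial.X) ∧
    ∀ z : ℝ, z ≠ 0 → (∀ j, z ≠ lam j) →
      Z z = Phat.eval z / Q.eval z ∧ W z = P.eval z / Q.eval z := by
  have hM2 : (2 : ℝ) * M ≠ 0 := by positivity
  set D : Polynomial ℝ := ∏ i, (X - C (lam i)) with hDdef
  set Dm : Polynomial ℝ := ∏ i, (X + C (lam i)) with hDmdef
  set Nw : Polynomial ℝ := ∑ i, C (b i) * ∏ j ∈ Finset.univ.erase i, (X - C (lam j)) with hNwdef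
  set Sz : Polynomial ℝ := ∑ i, C (c i) * ∏ j ∈ Finset.univ.erase i, (X - C (lam j)) with hSzdef
  set Nws : Polynomial ℝ := ∑ i, C (b i) * ∏ j ∈ Finset.univ.erase i, (X + C (lam j)) with hNwsdef
  set Szs : Polynomial ℝ := ∑ i, C (c i) * ∏ j ∈ Finset.univ.erase i, (X + C (lam j)) with hSzsdef
  set Nz : Polynomial ℝ := -D + C (2*M) * X * Sz with hNzdef
  set Nzs : Polynomial ℝ := Dm - C (2*M) * X * Szs with hNzsdef
  set U : Polynomial ℝ := Q * Nz - C (2*M) * X * D * Phat with hUdef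
  set V : Polynomial ℝ := Q * Nw - P * D with hVdef
  set T : Polynomial ℝ := C (2*M) * X * Dm * Phat + C (2*M) * X * P * Nws + Q * Nzs with hTdef
  have hDev : ∀ z : ℝ, D.eval z = ∏ i, (z - lam i) := fun z => by simp [hDdef, eval_prod]
  have hDmev : ∀ z : ℝ, Dm.eval z = ∏ i, (z + lam i) := fun z => by simp [hDmdef, eval_prod]
  -- pointwise eval identities
  have hnwz : ∀ z : ℝ, (∀ i, z - lam i ≠ 0) → Nw.eval z = D.eval z * W z := by
    intro z hzm
    rw [hW z, hDev z, aux_prod_sum lam b z hzm]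
    simp [hNwdef, eval_finset_sum, eval_prod]
  have hnzz : ∀ z : ℝ, z ≠ 0 → (∀ i, z - lam i ≠ 0) →
      Nz.eval z = 2*M*z * (D.eval z * Z z) := by
    intro z hz0 hzm
    have hs : D.eval z * (∑ i, c i / (z - lam i)) = Sz.eval z := by
      rw [hDev z, aux_prod_sum lam c z hzm]
      simp [hSzdef, eval_finset_sum, eval_prod]
    have hNe : Nz.eval z = -D.eval z + 2*M*z*Sz.eval z := by simp [hNzdef]
    rw [hNe, hZ z, ← hs]
    field_simp
  have hWsz : ∀ z : ℝ, Ws z = ∑ i, b i / (z + lam i) := by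
    intro z
    rw [hWs z, hW (-z), ← Finset.sum_neg_distrib]
    refine Finset.sum_congr rfl fun i _ => ?_
    rw [show -z - lam i = -(z + lam i) by ring, div_neg, neg_neg]
  have hZsz : ∀ z : ℝ, Zs z = 1/(2*M*z) - ∑ i, c i / (z + lam i) := by
    intro z
    rw [hZs z, hZ (-z)]
    have h2 : (∑ i, c i / (-z - lam i)) = -∑ i, c i / (z + lam i) := by
      rw [← Finset.sum_neg_distrib]
      refine Finset.sum_congr rfl fun i _ => ?_
      rw [show -z - lam i = -(z + lam i) by ring, div_neg]
    rw [h2, mul_neg, div_neg, neg_neg]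
    ring
  have hnwsz : ∀ z : ℝ, (∀ i, z + lam i ≠ 0) → Nws.eval z = Dm.eval z * Ws z := by
    intro z hzp
    rw [hWsz z, hDmev z, aux_prod_sum' lam b z hzp]
    simp [hNwsdef, eval_finset_sum, eval_prod]
  have hnzsz : ∀ z : ℝ, z ≠ 0 → (∀ i, z + lam i ≠ 0) →
      Nzs.eval z = 2*M*z * (Dm.eval z * Zs z) := by
    intro z hz0 hzp
    have hs : Dm.eval z * (∑ i, c i / (z + lam i)) = Szs.eval z := by
      rw [hDmev z, aux_prod_sum' lam c z hzp]
      simp [hSzsdef, eval_finset_sum, eval_prod]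
    have hNe : Nzs.eval z = Dm.eval z - 2*M*z*Szs.eval z := by simp [hNzsdef]
    rw [hNe, hZsz z, ← hs]
    field_simp
  have hkeyz : ∀ z : ℝ, z ≠ 0 → (∀ i, z - lam i ≠ 0) → (∀ i, z + lam i ≠ 0) →
      Z z + Zs z + W z * Ws z = 0 := by
    intro z hz0 hzm hzp
    rw [hZ z, hZsz z, hW z, hWsz z]
    have hk := aux_key lam b c hpos hc z hzm hzp
    linear_combination hk
  -- eventual positivity
  have hbase : ∀ᶠ z : ℝ in atTop, 0 < z ∧ ∀ i, lam i < z :=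
    (eventually_gt_atTop 0).and (Filter.eventually_all.2 fun i => eventually_gt_atTop _)
  -- degree bounds
  have hcard : Fintype.card (Fin (n-1)) = n - 1 := Fintype.card_fin _
  have hdD : D.natDegree ≤ n - 1 := by
    refine le_trans (Polynomial.natDegree_prod_le _ _) ?_
    simp [natDegree_X_sub_C]
  have hdDm : Dm.natDegree ≤ n - 1 := by
    refine le_trans (Polynomial.natDegree_prod_le _ _) ?_
    simp [natDegree_X_add_C]
  have hdXD : (C (2*M) * X * D).natDegree ≤ n := by
    refine le_trans (natDegree_mul_le) ?_
    have h1 : (C (2*M) * X).natDegree ≤ 1 :=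
      le_trans (natDegree_C_mul_le _ _) (le_of_eq natDegree_X)
    omega
  have hdXDm : (C (2*M) * X * Dm).natDegree ≤ n := by
    refine le_trans (natDegree_mul_le) ?_
    have h1 : (C (2*M) * X).natDegree ≤ 1 :=
      le_trans (natDegree_C_mul_le _ _) (le_of_eq natDegree_X)
    omega
  -- degree of U
  have hdU : U.natDegree ≤ n - 1 := by
    refine aux_deg_le U (n-1) ?_
    have o1 : (fun z : ℝ => (C (2*M) * X * D).eval z) =O[atTop] (fun z : ℝ => z ^ n) :=
      aux_eval_bigO _ _ hdXD
    refine (o1.mul happroxZ).congr' ?_ ?_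
    · filter_upwards [hbase] with z hz
      have hzm : ∀ i, z - lam i ≠ 0 := fun i => sub_ne_zero.2 (hz.2 i).ne'
      have hnz := hnzz z hz.1.ne' hzm
      simp only [hUdef, eval_sub, eval_mul, eval_C, eval_X]
      rw [hnz]; ring
    · filter_upwards [eventually_ne_atTop (0:ℝ)] with z hz
      rw [show (z:ℝ)^n = z^(n-1) * z from by rw [← pow_succ]; congr 1; omega,
        mul_assoc, mul_inv_cancel₀ hz, mul_one]
  -- degree of V
  have hdV : V.natDegree ≤ n - 1 := by
    refine aux_deg_le V (n-1) ?_
    have o1 : (fun z : ℝ => D.eval z) =O[atTop] (fun z : ℝ => z ^ (n-1)) :=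
      aux_eval_bigO _ _ hdD
    refine (o1.mul happroxW).congr' ?_ ?_
    · filter_upwards [hbase] with z hz
      have hzm : ∀ i, z - lam i ≠ 0 := fun i => sub_ne_zero.2 (hz.2 i).ne'
      have hnw := hnwz z hzm
      simp only [hVdef, eval_sub, eval_mul]
      rw [hnw]; ring
    · exact Filter.Eventually.of_forall fun z => mul_one _
  -- T is zero
  have hT0 : T = 0 := by
    have hdT : T.natDegree ≤ 0 := by
      refine aux_deg_le T 0 ?_
      have o1 : (fun z : ℝ => (C (2*M) * X * Dm).eval z) =O[atTop] (fun z : ℝ => z ^ n) :=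
        aux_eval_bigO _ _ hdXDm
      refine (o1.mul hsym).congr' ?_ ?_
      · filter_upwards [hbase] with z hz
        have hzp : ∀ i, z + lam i ≠ 0 := fun i => ne_of_gt (by have := hpos i; linarith [hz.1])
        have h1 := hnwsz z hzp
        have h2 := hnzsz z hz.1.ne' hzp
        simp only [hTdef, eval_add, eval_mul, eval_C, eval_X]
        rw [h1, h2]; ring
      · filter_upwards [eventually_ne_atTop (0:ℝ)] with z hz
        rw [pow_zero, mul_inv_cancel₀ (pow_ne_zero n hz)]
    have h1 := eq_C_of_natDegree_le_zero hdT
    have h2 : T.eval 0 = 0 := by simp [hTdef, hQ0]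
    rw [h1] at h2 ⊢
    simp only [eval_C] at h2
    rw [h2, map_zero]
  -- master identity
  have hmaster : U * Dm + C (2*M) * X * Nws * V = 0 := by
    apply Polynomial.eq_of_infinite_eval_eq
    obtain ⟨R, hR⟩ := Filter.eventually_atTop.1 hbase
    refine (Set.Ioi_infinite R).mono ?_
    intro z hz
    obtain ⟨hz0, hzl⟩ := hR z (le_of_lt hz)
    have hzm : ∀ i, z - lam i ≠ 0 := fun i => sub_ne_zero.2 (hzl i).ne'
    have hzp : ∀ i, z + lam i ≠ 0 := fun i => ne_of_gt (by have := hpos i; linarith)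
    have r1 := hnwz z hzm
    have r2 := hnzz z hz0.ne' hzm
    have r3 := hnwsz z hzp
    have r4 := hnzsz z hz0.ne' hzp
    have r5 := hkeyz z hz0.ne' hzm hzp
    have r6 : T.eval z = 0 := by rw [hT0, eval_zero]
    simp only [hTdef, eval_add, eval_mul, eval_C, eval_X] at r6
    rw [r3, r4] at r6
    simp only [Set.mem_setOf_eq, hUdef, hVdef, eval_add, eval_sub, eval_mul, eval_C, eval_X,
      eval_zero]
    rw [r1, r2, r3]
    linear_combination (-(D.eval z)) * r6 + (2*M*z*(Q.eval z)*(D.eval z)*(Dm.eval z)) * r5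
  -- V vanishes
  have hDmne : Dm ≠ 0 := by
    have : Dm.Monic := monic_prod_of_monic _ _ fun i _ => monic_X_add_C _
    exact this.ne_zero
  have hNwsev : ∀ j, Nws.eval (-(lam j)) = b j * ∏ k ∈ Finset.univ.erase j, (-(lam j) + lam k) := by
    intro j
    have : Nws.eval (-(lam j)) = ∑ i, b i * ∏ k ∈ Finset.univ.erase i, (-(lam j) + lam k) := by
      simp [hNwsdef, eval_finset_sum, eval_prod]
    rw [this]
    refine Finset.sum_eq_single_of_mem j (Finset.mem_univ j) fun i _ hij => ?_
    have hjmem : j ∈ Finset.univ.erase i := Finset.mem_erase.2 ⟨(Ne.symm hij), Finset.mem_univ j⟩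
    rw [Finset.prod_eq_zero hjmem (by ring), mul_zero]
  have hNwsne : ∀ j, Nws.eval (-(lam j)) ≠ 0 := by
    intro j
    rw [hNwsev j]
    refine mul_ne_zero (hb j).ne ?_
    refine Finset.prod_ne_zero_iff.2 fun k hk => ?_
    have hkj : k ≠ j := (Finset.mem_erase.1 hk).1
    have : lam k ≠ lam j := fun h => hkj (hmono.injective h)
    intro h0
    exact this (by linarith [h0])
  have hVj : ∀ j, V.eval (-(lam j)) = 0 := by
    intro j
    have hme := congrArg (eval (-(lam j))) hmaster
    have hDmj : Dm.eval (-(lam j)) = 0 := by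
      rw [hDmev]
      exact Finset.prod_eq_zero (Finset.mem_univ j) (by ring)
    simp only [eval_add, eval_mul, eval_C, eval_X, eval_zero, hDmj, mul_zero, zero_add] at hme
    have hfac : (2*M) * -(lam j) * Nws.eval (-(lam j)) ≠ 0 :=
      mul_ne_zero (mul_ne_zero hM2 (neg_ne_zero.2 (hpos j).ne')) (hNwsne j)
    have := mul_eq_zero.1 hme
    rcases this with h | h
    · exact absurd (by linear_combination h) hfac
    · exact h
  have hV0 : V.eval 0 = 0 := by simp [hVdef, hQ0, hP0]
  have hVzero : V = 0 := by
    refine aux_zero_of_roots V (insert (0:ℝ) (Finset.image (fun j => -lam j) Finset.univ)) ?_ ?_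
    · have h0 : (0:ℝ) ∉ Finset.image (fun j => -lam j) Finset.univ := by
        simp only [Finset.mem_image, not_exists, not_and]
        intro j _ h
        have := hpos j; linarith
      rw [Finset.card_insert_of_notMem h0,
        Finset.card_image_of_injective _ (fun i j h => hmono.injective (neg_injective h))]
      simp only [Finset.card_univ, hcard]
      omega
    · intro x hx
      rcases Finset.mem_insert.1 hx with rfl | hx
      · exact hV0
      · obtain ⟨j, _, rfl⟩ := Finset.mem_image.1 hx
        exact hVj j
  have hUzero : U = 0 := by
    rw [hVzero, mul_zero, add_zero] at hmaster
    exact (mul_eq_zero.1 hmaster).resolve_right hDmne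
  -- Q * Nw = P * D  and  Q * Nz = C(2M) X D Phat
  have hQNw : Q * Nw = P * D := by
    have := hVzero
    rw [hVdef] at this
    linear_combination this
  have hQNz : Q * Nz = C (2*M) * X * D * Phat := by
    have := hUzero
    rw [hUdef] at this
    linear_combination this
  -- Nw does not vanish at the eigenvalues
  have hNwev : ∀ j, Nw.eval (lam j) = b j * ∏ k ∈ Finset.univ.erase j, (lam j - lam k) := by
    intro j
    have : Nw.eval (lam j) = ∑ i, b i * ∏ k ∈ Finset.univ.erase i, (lam j - lam k) := by
      simp [hNwdef, eval_finset_sum, eval_prod]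
    rw [this]
    refine Finset.sum_eq_single_of_mem j (Finset.mem_univ j) fun i _ hij => ?_
    have hjmem : j ∈ Finset.univ.erase i := Finset.mem_erase.2 ⟨(Ne.symm hij), Finset.mem_univ j⟩
    rw [Finset.prod_eq_zero hjmem (by ring), mul_zero]
  have hNwne : ∀ j, Nw.eval (lam j) ≠ 0 := by
    intro j
    rw [hNwev j]
    refine mul_ne_zero (hb j).ne ?_
    refine Finset.prod_ne_zero_iff.2 fun k hk => ?_
    have hkj : k ≠ j := (Finset.mem_erase.1 hk).1
    have : lam k ≠ lam j := fun h => hkj (hmono.injective h)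
    intro h0
    exact this (by linarith)
  have hDj : ∀ j, D.eval (lam j) = 0 := by
    intro j
    rw [hDev]
    exact Finset.prod_eq_zero (Finset.mem_univ j) (by ring)
  have hQj : ∀ j, Q.eval (lam j) = 0 := by
    intro j
    have h := congrArg (eval (lam j)) hQNw
    simp only [eval_mul, hDj j, mul_zero] at h
    exact (mul_eq_zero.1 h).resolve_right (hNwne j)
  -- exact form of Q
  have hDmonic : D.Monic := monic_prod_of_monic _ _ fun i _ => monic_X_sub_C _
  have hXD : (X * D : Polynomial ℝ).Monic := monic_X.mul hDmonic
  have hDdeg : D.natDegree = n - 1 := by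
    rw [hDdef, Polynomial.natDegree_prod _ _ fun i _ => X_sub_C_ne_zero (lam i)]
    simp [natDegree_X_sub_C]
  have hXDdeg : (X * D : Polynomial ℝ).natDegree = n := by
    rw [natDegree_mul X_ne_zero hDmonic.ne_zero, natDegree_X, hDdeg]
    omega
  set q : ℝ := Q.coeff n with hqdef
  have hQform : Q = C q * (X * D) := by
    have hXDcoeff : (X * D : Polynomial ℝ).coeff n = 1 := by
      have := hXD.coeff_natDegree
      rwa [hXDdeg] at this
    set Rr : Polynomial ℝ := Q - C q * (X * D) with hRdef
    have hRzero : Rr = 0 := by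
      refine aux_zero_of_roots Rr (insert (0:ℝ) (Finset.image lam Finset.univ)) ?_ ?_
      · have h0 : (0:ℝ) ∉ Finset.image lam Finset.univ := by
          simp only [Finset.mem_image, not_exists, not_and]
          intro j _ h
          have := hpos j; linarith
        have hcard2 : (insert (0:ℝ) (Finset.image lam Finset.univ)).card = n := by
          rw [Finset.card_insert_of_notMem h0,
            Finset.card_image_of_injective _ hmono.injective]
          simp only [Finset.card_univ, hcard]
          omega
        rw [hcard2]
        -- natDegree Rr ≤ n - 1 < n
        have hRn : Rr.natDegree ≤ n := by
          refine le_trans (natDegree_sub_le _ _) ?_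
          have : (C q * (X * D)).natDegree ≤ n :=
            le_trans (natDegree_C_mul_le _ _) (le_of_eq hXDdeg)
          omega
        have hRcoeff : Rr.coeff n = 0 := by
          rw [hRdef, coeff_sub, coeff_C_mul, hXDcoeff, mul_one, hqdef, sub_self]
        rcases eq_or_ne Rr 0 with h | h
        · rw [h]; simp; omega
        · have : Rr.natDegree ≠ n := by
            intro hh
            have := Polynomial.leadingCoeff_ne_zero.2 h
            rw [Polynomial.leadingCoeff, hh] at this
            exact this hRcoeff
          omega
      · intro x hx
        rcases Finset.mem_insert.1 hx with rfl | hx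
        · simp [hRdef, hQ0]
        · obtain ⟨j, _, rfl⟩ := Finset.mem_image.1 hx
          simp [hRdef, hQj j, hDj j]
    have := hRzero
    rw [hRdef, sub_eq_zero] at this
    exact this
  have hXDne : (X * D : Polynomial ℝ) ≠ 0 := hXD.ne_zero
  -- cancel X * D
  have hcancel : C q * Nz = C (2*M) * Phat := by
    have h1 : (X * D) * (C q * Nz) = (X * D) * (C (2*M) * Phat) := by
      have := hQNz
      rw [hQform] at this
      linear_combination this
    exact mul_left_cancel₀ hXDne h1
  -- the normalization
  have hD0 : D.eval 0 ≠ 0 := by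
    rw [hDev]
    refine Finset.prod_ne_zero_iff.2 fun i _ => ?_
    have := hpos i
    intro h; linarith
  have hNz0 : Nz.eval 0 = -(D.eval 0) := by simp [hNzdef]
  have hqD0 : q * D.eval 0 = -(2*M) := by
    have h := congrArg (eval 0) hcancel
    simp only [eval_mul, eval_C, hNz0, hPhat0, mul_one] at h
    linarith
  have hqne : q ≠ 0 := by
    intro h
    rw [h, zero_mul] at hqD0
    have := hM
    linarith
  constructor
  · -- the formula for Q
    have hfac : ∀ j, (X : Polynomial ℝ) - C (lam j)
        = C (-(lam j)) * (1 - C (lam j)⁻¹ * X) := by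
      intro j
      have hj : lam j ≠ 0 := (hpos j).ne'
      have : (-(lam j)) * (lam j)⁻¹ = -1 := by field_simp
      calc (X : Polynomial ℝ) - C (lam j)
          = C (-(lam j)) - C ((-(lam j)) * (lam j)⁻¹) * X := by
            rw [this]; simp only [map_neg, map_one]; ring
        _ = C (-(lam j)) * (1 - C (lam j)⁻¹ * X) := by rw [C_mul]; ring
    have hD0ev : D.eval 0 = ∏ j, -(lam j) := by
      rw [hDev]; exact Finset.prod_congr rfl fun j _ => by ring
    have hDG : D = C (D.eval 0) * ∏ j, (1 - C (lam j)⁻¹ * X) := by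
      calc D = ∏ j, (C (-(lam j)) * (1 - C (lam j)⁻¹ * X)) := by
            rw [hDdef]; exact Finset.prod_congr rfl fun j _ => hfac j
        _ = (∏ j, C (-(lam j))) * ∏ j, (1 - C (lam j)⁻¹ * X) := Finset.prod_mul_distrib
        _ = C (∏ j, -(lam j)) * ∏ j, (1 - C (lam j)⁻¹ * X) := by
            rw [map_prod (C : ℝ →+* Polynomial ℝ)]
        _ = C (D.eval 0) * ∏ j, (1 - C (lam j)⁻¹ * X) := by rw [hD0ev]
    rw [hQform, hDG]
    have : C q * (X * (C (D.eval 0) * ∏ j, (1 - C (lam j)⁻¹ * X)))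
        = C (q * D.eval 0) * X * ∏ j, (1 - C (lam j)⁻¹ * X) := by
      rw [C_mul]; ring
    rw [this, hqD0]
    norm_num
  · -- exactness
    intro z hz0 hzl
    have hzm : ∀ i, z - lam i ≠ 0 := fun i => sub_ne_zero.2 (hzl i)
    have hDzne : D.eval z ≠ 0 := by
      rw [hDev]
      exact Finset.prod_ne_zero_iff.2 fun i _ => hzm i
    have hQz : Q.eval z = q * (z * D.eval z) := by
      rw [hQform]; simp [eval_mul]
    have hQzne : Q.eval z ≠ 0 := by
      rw [hQz]
      exact mul_ne_zero hqne (mul_ne_zero hz0 hDzne)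
    constructor
    · rw [eq_div_iff hQzne]
      have h1 : q * Nz.eval z = 2*M * Phat.eval z := by
        have := congrArg (eval z) hcancel
        simpa [eval_mul] using this
      have h2 := hnzz z hz0 hzm
      rw [hQz]
      have h6 : (2*M) * (Z z * (q * (z * eval z D))) = (2*M) * eval z Phat := by
        linear_combination h1 - q * h2
      exact mul_left_cancel₀ hM2 h6
    · rw [eq_div_iff hQzne]
      have h3 := congrArg (eval z) hQNw
      simp only [eval_mul] at h3
      have h4 := hnwz z hzm
      have h5 : (W z * Q.eval z) * D.eval z = P.eval z * D.eval z := by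
        rw [h4] at h3
        linear_combination h3
      exact mul_right_cancel₀ hDzne h5
end
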